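/- arXiv:1603.06881 — 2 statements merged into one kernel-verified Lean document; each statement's English description precedes it below -/
import Mathlib

section
/- Suppose M* ∈ C_SST is π-SST for the identity permutation. Then with probability at least 1 − n^{−20} (over both the random observation Y and the randomization in Step 2), the permutation π_CRL produced by the first two steps of the CRL estimator satisfies: (a) max over i ∈ [n] of Σ_{ℓ=1}^n |M*_{iℓ} − M*_{π_CRL(i)ℓ}| ≤ √n·(log n)²; and (b) the subset S of similar items identified in Step 2 has size at least k_max(M*). -/
open MeasureTheory ENNReal

noncomputable section

namespace SSTPaper

/-- Squared Frobenius norm of an `n × n` real matrix (as a function). -/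
def frobSq {n : ℕ} (A : Fin n → Fin n → ℝ) : ℝ := ∑ i, ∑ j, (A i j) ^ 2

/-- Trace inner product `⟨A, B⟩ = trace (Aᵀ B)`. -/
def tinner {n : ℕ} (A B : Fin n → Fin n → ℝ) : ℝ := ∑ i, ∑ j, A i j * B i j

/-- The SST class: shifted-skew-symmetric matrices with entries in `[0,1]` that are
`π`-SST for some permutation `π` (where `π` ranks `i` above `j` iff `π j < π i`). -/
def sstClass (n : ℕ) : Set (Fin n → Fin n → ℝ) :=
  {M | (∀ i j, 0 ≤ M i j ∧ M i j ≤ 1) ∧ (∀ i j, M j i = 1 - M i j) ∧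
    ∃ π : Equiv.Perm (Fin n), ∀ i j k : Fin n, π j < π i → M j k ≤ M i k}

/-- The set of SST matrices faithful to a given permutation `π`. -/
def sstOf {n : ℕ} (π : Equiv.Perm (Fin n)) : Set (Fin n → Fin n → ℝ) :=
  {M | (∀ i j, 0 ≤ M i j ∧ M i j ≤ 1) ∧ (∀ i j, M j i = 1 - M i j) ∧
    ∀ i j k : Fin n, π j < π i → M j k ≤ M i k}

/-- Size of the largest indifference set of `M`: the maximal number of identical rows. -/
def kmaxM {n : ℕ} (M : Fin n → Fin n → ℝ) : ℕ :=
  Finset.univ.sup fun i => Set.ncard {j : Fin n | M j = M i}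

/-- Number of indifference sets of `M`: the number of distinct rows. -/
def numSets {n : ℕ} (M : Fin n → Fin n → ℝ) : ℕ := Set.ncard (Set.range M)

/-- SST matrices having an indifference set of size at least `k`. -/
def sstClassK (n k : ℕ) : Set (Fin n → Fin n → ℝ) :=
  {M | M ∈ sstClass n ∧ k ≤ kmaxM M}

/-- SST matrices that respect some indifference-set partition of sizes `k`. -/
def sstClassPart (n s : ℕ) (k : Fin s → ℕ) : Set (Fin n → Fin n → ℝ) :=
  {M | M ∈ sstClass n ∧ ∃ P : Fin s → Finset (Fin n),
    (∀ a b, a ≠ b → Disjoint (P a) (P b)) ∧ (∀ a, (P a).card = k a) ∧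
    (∀ i : Fin n, ∃ a, i ∈ P a) ∧
    ∀ a b : Fin s, ∀ i ∈ P a, ∀ i' ∈ P a, ∀ j ∈ P b, ∀ j' ∈ P b, M i j = M i' j'}

/-- Bernoulli measure on `Bool` with success probability `p`. -/
def bern (p : ℝ) : Measure Bool :=
  (ENNReal.ofReal p) • Measure.dirac true + (ENNReal.ofReal (1 - p)) • Measure.dirac false

/-- The law of the observation matrix `Y`: entries on and above the diagonal independent,
`P[Y i j = 1] = M i j` for `i < j`, `Y j i = 1 - Y i j` off the diagonal, and fair coin
on the diagonal. -/
def obsMeasure {n : ℕ} (M : Fin n → Fin n → ℝ) : Measure (Fin n → Fin n → ℝ) :=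
  Measure.map (fun (ω : Fin n × Fin n → Bool) (i j : Fin n) =>
      if i < j then (if ω (i, j) then (1 : ℝ) else 0)
      else if j < i then 1 - (if ω (j, i) then (1 : ℝ) else 0)
      else (if ω (i, j) then (1 : ℝ) else 0))
    (Measure.pi fun p : Fin n × Fin n => bern (if p.1 = p.2 then 1 / 2 else M p.1 p.2))

/-- The risk `E ‖M̂(Y) − M*‖²_F` of an estimator. -/
def risk {n : ℕ} (Mhat : (Fin n → Fin n → ℝ) → Fin n → Fin n → ℝ)
    (Mstar : Fin n → Fin n → ℝ) : ℝ≥0∞ :=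
  ∫⁻ Y, ENNReal.ofReal (frobSq (Mhat Y - Mstar)) ∂(obsMeasure Mstar)

/-- The `(s, k)`-oracle risk. -/
def oracleRisk (n s : ℕ) (k : Fin s → ℕ) : ℝ≥0∞ :=
  ⨅ (Mhat : (Fin n → Fin n → ℝ) → Fin n → Fin n → ℝ) (_ : Measurable Mhat),
    ⨆ (Mstar : Fin n → Fin n → ℝ) (_ : Mstar ∈ sstClassPart n s k), risk Mhat Mstar

/-- The global adaptivity index of an estimator. -/
def adaptIndex {n : ℕ} (Mhat : (Fin n → Fin n → ℝ) → Fin n → Fin n → ℝ) : ℝ≥0∞ :=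
  ⨆ (s : ℕ) (k : Fin s → ℕ) (_ : ∀ a, 1 ≤ k a) (_ : ∑ a, k a = n) (_ : ∀ a, k a < n),
    (⨆ (Mstar : Fin n → Fin n → ℝ) (_ : Mstar ∈ sstClassPart n s k), risk Mhat Mstar) /
      oracleRisk n s k

/-- Number of wins of item `i`. -/
def winCount {n : ℕ} (Y : Fin n → Fin n → ℝ) (i : Fin n) : ℝ := ∑ j, Y i j

instance {n : ℕ} : MeasurableSpace (Equiv.Perm (Fin n)) := ⊤

/-- Uniform measure on a (finite) set. -/
def unifOn {α : Type*} [Fintype α] [MeasurableSpace α] (s : Set α) : Measure α :=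
  (s.ncard : ℝ≥0∞)⁻¹ • ∑ a ∈ (Set.toFinite s).toFinset, Measure.dirac a

end SSTPaper

/-!
Write `m i = ∑ l, M* i l` for the row sums. Since the rows of `M*` increase pointwise with the
index, the ℓ¹ distance between two rows is the difference of their row sums, and `m` is monotone.
The win count `N i` is a sum of `n` independent `[0,1]`-valued entries with mean `m i`, so by
Hoeffding's inequality and a union bound, with probability at least `1 - n⁻²⁰` every
`|N i - m i| ≤ √n log n / 2`. On that event a pigeonhole argument shows that sorting by `N` changes
row sums by at most `√n log n`, and shuffling inside the window `S` by at most `2 √n log n` more.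
Items of one indifference set share their row sum, so their win counts are within `√n log n` of
each other; they form a candidate window, whence `|S| ≥ k_max(M*)`.
-/

theorem Function.Injective.exists_le_and_le_apply {α : Type*} [LinearOrder α]
    [LocallyFiniteOrderBot α] {f : α → α} (hf : f.Injective) (r : α) :
    ∃ k ≤ r, r ≤ f k := by
  by_contra! h
  have := Finset.card_le_card_of_injOn f (s := Finset.Iic r) (t := Finset.Iio r)
    (fun k hk => by simpa using h k (by simpa using hk)) hf.injOn
  rw [Finset.Iic_eq_cons_Iio, Finset.card_cons] at this
  omega

section SortedByNoisyScores

variable {α : Type*} [LinearOrder α] [LocallyFiniteOrderBot α] {m N : α → ℝ} {f : α → α} {t : ℝ}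

theorem le_apply_add_of_sorted_of_abs_sub_le (hm : Monotone m) (hf : f.Injective)
    (hsort : ∀ a b, f a < f b → N a ≤ N b) (hN : ∀ a, |N a - m a| ≤ t) (i : α) :
    m i ≤ m (f i) + 2 * t := by
  obtain ⟨k, hk, hik⟩ := hf.exists_le_and_le_apply (f i)
  obtain rfl | hki := eq_or_ne k i
  · linarith [hm hk, abs_nonneg (N k - m k), hN k]
  have hNik : N i ≤ N k := hsort i k (hik.lt_of_ne fun h => hki (hf h).symm)
  linarith [hm hk, (abs_le.1 (hN i)).1, (abs_le.1 (hN k)).2]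

theorem abs_sub_apply_le_of_sorted_of_abs_sub_le [LocallyFiniteOrderTop α] (hm : Monotone m)
    (hf : f.Injective) (hsort : ∀ a b, f a < f b → N a ≤ N b) (hN : ∀ a, |N a - m a| ≤ t)
    (i : α) : |m i - m (f i)| ≤ 2 * t := by
  -- the reverse inequality is the same statement for the order dual and the negated scores
  have hdual := le_apply_add_of_sorted_of_abs_sub_le (α := αᵒᵈ) (m := fun a => -m a)
    (N := fun a => -N a) (f := f) hm.dual_left.neg hf (fun a b h => neg_le_neg (hsort b a h))
    (fun a => by rw [← abs_neg]; convert hN a using 2; ring) i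
  rw [abs_sub_le_iff]
  constructor
  · linarith [le_apply_add_of_sorted_of_abs_sub_le hm hf hsort hN i]
  · linarith

theorem abs_sub_apply_apply_le_of_sorted_of_shuffle [LocallyFiniteOrderTop α] (hm : Monotone m)
    (hf : f.Injective) (hsort : ∀ a b, f a < f b → N a ≤ N b) (hN : ∀ a, |N a - m a| ≤ t)
    {S : Finset α} {w : ℝ} (hw : 0 ≤ w) (hS : ∀ a ∈ S, ∀ b ∈ S, |N a - N b| ≤ w)
    {ρ : Equiv.Perm α} (hρ : ∀ a ∉ S, ρ a = a) (i : α) :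
    |m i - m (f (ρ i))| ≤ w + 4 * t := by
  have hshuffle : |m i - m (ρ i)| ≤ w + 2 * t := by
    by_cases hi : i ∈ S
    · have hρi : ρ i ∈ S := by
        by_contra h
        exact h (by rwa [ρ.injective (hρ (ρ i) h)])
      have hNi := abs_le.1 (hN i)
      have hNρi := abs_le.1 (hN (ρ i))
      have hwindow := abs_le.1 (hS i hi (ρ i) hρi)
      rw [abs_le]
      constructor <;> linarith
    · rw [hρ i hi, sub_self, abs_zero]
      linarith [abs_nonneg (N i - m i), hN i]
  calc |m i - m (f (ρ i))| ≤ |m i - m (ρ i)| + |m (ρ i) - m (f (ρ i))| := abs_sub_le _ _ _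
    _ ≤ w + 4 * t := by
      linarith [abs_sub_apply_le_of_sorted_of_abs_sub_le hm hf hsort hN (ρ i)]

end SortedByNoisyScores

theorem Monotone.sum_abs_sub_eq_abs_sum_sub {α ι : Type*} [LinearOrder α] [Fintype ι]
    {M : α → ι → ℝ} (hM : Monotone M) (i j : α) :
    ∑ l, |M i l - M j l| = |∑ l, M i l - ∑ l, M j l| := by
  wlog hji : j ≤ i generalizing i j
  · simp_rw [abs_sub_comm (M i _), abs_sub_comm (∑ l, M i l)]
    exact this j i (le_of_not_ge hji)
  rw [abs_of_nonneg (sub_nonneg.2 (Finset.sum_le_sum fun l _ => hM hji l)),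
    ← Finset.sum_sub_distrib]
  exact Finset.sum_congr rfl fun l _ => abs_of_nonneg (sub_nonneg.2 (hM hji l))

theorem two_mul_mul_exp_neg_log_sq_le {x : ℝ} (hx : 0 < x) (hlog : 64 ≤ Real.log x) :
    2 * x * Real.exp (-Real.log x ^ 2 / 2) ≤ (x ^ 20)⁻¹ := by
  have hexp : x ^ 21 = Real.exp (21 * Real.log x) := by
    rw [show (21 : ℝ) = (21 : ℕ) by norm_num, Real.exp_nat_mul, Real.exp_log hx]
  rw [le_inv_comm₀ (by positivity) (by positivity), ← one_div, le_div_iff₀ (by positivity)]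
  calc x ^ 20 * (2 * x * Real.exp (-Real.log x ^ 2 / 2))
      = 2 * (x ^ 21 * Real.exp (-Real.log x ^ 2 / 2)) := by ring
    _ = 2 * Real.exp (21 * Real.log x + -Real.log x ^ 2 / 2) := by rw [hexp, Real.exp_add]
    _ ≤ Real.exp 1 * Real.exp (-1) := by
        gcongr
        · linarith [Real.add_one_le_exp 1]
        · nlinarith
    _ = 1 := by rw [← Real.exp_add]; simp

open ProbabilityTheory in
theorem measureReal_le_abs_sum_sub_integral_le {Ω ι : Type*} {mΩ : MeasurableSpace Ω}
    {μ : Measure Ω} [IsProbabilityMeasure μ] [Fintype ι] {X : ι → Ω → ℝ}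
    (hindep : iIndepFun X μ) (hmeas : ∀ j, Measurable (X j))
    (hX : ∀ j ω, X j ω ∈ Set.Icc 0 1) {ε : ℝ} (hε : 0 ≤ ε) :
    μ.real {ω | ε ≤ |∑ j, (X j ω - μ[X j])|} ≤ 2 * Real.exp (-2 * ε ^ 2 / Fintype.card ι) := by
  have hsubG : ∀ j, HasSubgaussianMGF (fun ω => X j ω - μ[X j]) ((‖(1 : ℝ) - 0‖₊ / 2) ^ 2) μ :=
    fun j => hasSubgaussianMGF_of_mem_Icc (hmeas j).aemeasurable (ae_of_all _ (hX j))
  have hcentered : iIndepFun (fun j ω => X j ω - μ[X j]) μ :=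
    hindep.comp (fun j x => x - ∫ ω, X j ω ∂μ) fun _ => by fun_prop
  have hupper := HasSubgaussianMGF.measure_sum_ge_le_of_iIndepFun (s := Finset.univ)
    hcentered (fun j _ => hsubG j) hε
  have hlower := HasSubgaussianMGF.measure_sum_ge_le_of_iIndepFun (s := Finset.univ)
    (hcentered.comp (fun _ x => -x) fun _ => measurable_neg) (fun j _ => (hsubG j).neg) hε
  have hparam : -ε ^ 2 / (2 * ((∑ _j : ι, (‖(1 : ℝ) - 0‖₊ / 2) ^ 2 : NNReal) : ℝ))
      = -2 * ε ^ 2 / Fintype.card ι := by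
    simp only [sub_zero, nnnorm_one, Finset.sum_const, Finset.card_univ, nsmul_eq_mul]
    push_cast
    ring
  simp only [Function.comp_def, Finset.sum_neg_distrib, hparam] at hupper hlower
  calc μ.real {ω | ε ≤ |∑ j, (X j ω - μ[X j])|}
      ≤ μ.real ({ω | ε ≤ ∑ j, (X j ω - μ[X j])} ∪ {ω | ε ≤ -∑ j, (X j ω - μ[X j])}) :=
        measureReal_mono fun _ hω => le_abs.1 (Set.mem_ofPred.1 hω)
    _ ≤ _ := (measureReal_union_le _ _).trans (by linarith)

namespace SSTPaper

theorem kmaxM_le_of_forall_card_le {n c : ℕ} {M : Fin n → Fin n → ℝ}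
    (h : ∀ T : Finset (Fin n), (∀ a ∈ T, ∀ b ∈ T, M a = M b) → T.card ≤ c) : kmaxM M ≤ c :=
  Finset.sup_le fun i _ => by
    classical
    rw [Set.ncard_eq_toFinset_card']
    exact h _ fun a ha b hb => by simp_all

section UniformMeasure

variable {α β : Type*} [Fintype α] [MeasurableSpace α] [DiscreteMeasurableSpace α]

theorem unifOn_apply (s A : Set α) :
    unifOn s A = (s.ncard : ℝ≥0∞)⁻¹ * ∑ a ∈ s.toFinite.toFinset, A.indicator 1 a := by
  simp only [unifOn, Measure.smul_apply, Measure.finsetSum_apply, smul_eq_mul,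
    Measure.dirac_apply]

theorem unifOn_compl_self (s : Set α) : unifOn s sᶜ = 0 := by
  rw [unifOn_apply, Finset.sum_eq_zero fun a ha => by simp_all, mul_zero]

theorem unifOn_univ_singleton (a : α) :
    unifOn (Set.univ : Set α) {a} = (Fintype.card α : ℝ≥0∞)⁻¹ := by
  rw [unifOn_apply, Finset.sum_eq_single a (fun b _ hb => by simp [hb]) (by simp)]
  simp [Set.ncard_univ, Nat.card_eq_fintype_card]

theorem isProbabilityMeasure_unifOn_univ [Nonempty α] :
    IsProbabilityMeasure (unifOn (Set.univ : Set α)) := by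
  constructor
  rw [unifOn_apply]
  simp [Set.ncard_univ, Nat.card_eq_fintype_card, ENNReal.inv_mul_cancel]

theorem apply_mem_of_map_unifOn_univ_eq [Fintype β] [MeasurableSpace β]
    [DiscreteMeasurableSpace β] {g : α → β} {T : Set β}
    (h : (unifOn Set.univ).map g = unifOn T) (a : α) : g a ∈ T := by
  by_contra ha
  have hmap : (unifOn Set.univ).map g Tᶜ = 0 := h ▸ unifOn_compl_self T
  rw [Measure.map_apply .of_discrete .of_discrete] at hmap
  have := measure_mono_null (Set.singleton_subset_iff.2 ha) hmap
  simp [unifOn_univ_singleton] at this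

end UniformMeasure

section Bernoulli

variable {p : ℝ}

theorem isProbabilityMeasure_bern (h0 : 0 ≤ p) (h1 : p ≤ 1) :
    IsProbabilityMeasure (bern p) := by
  constructor
  simp [bern, ← ENNReal.ofReal_add h0 (sub_nonneg.2 h1)]

theorem integral_bern (h0 : 0 ≤ p) (h1 : p ≤ 1) (g : Bool → ℝ) :
    ∫ b, g b ∂bern p = p * g true + (1 - p) * g false := by
  rw [bern, integral_add_measure (Integrable.of_finite.smul_measure ENNReal.ofReal_ne_top)
    (Integrable.of_finite.smul_measure ENNReal.ofReal_ne_top), integral_smul_measure,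
    integral_smul_measure, integral_dirac, integral_dirac, ENNReal.toReal_ofReal h0,
    ENNReal.toReal_ofReal (sub_nonneg.2 h1), smul_eq_mul, smul_eq_mul]

end Bernoulli

section ObservationModel

variable {n : ℕ}

def coinProb (M : Fin n → Fin n → ℝ) (p : Fin n × Fin n) : ℝ :=
  if p.1 = p.2 then 1 / 2 else M p.1 p.2

abbrev coinMeasure (M : Fin n → Fin n → ℝ) : Measure (Fin n × Fin n → Bool) :=
  Measure.pi fun p => bern (coinProb M p)

def obsOfCoins (ω : Fin n × Fin n → Bool) (i j : Fin n) : ℝ :=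
  if i < j then (if ω (i, j) then (1 : ℝ) else 0)
  else if j < i then 1 - (if ω (j, i) then (1 : ℝ) else 0)
  else (if ω (i, j) then (1 : ℝ) else 0)

theorem obsMeasure_eq_map (M : Fin n → Fin n → ℝ) :
    obsMeasure M = (coinMeasure M).map obsOfCoins := rfl

/-- Entry `(i, j)` of the observation is read off the coin at `(min i j, max i j)`; for a fixed
row `i` these coins are distinct, which is where the independence of the row comes from. -/
def coinKey (i j : Fin n) : Fin n × Fin n := if j < i then (j, i) else (i, j)

def entryOfCoin (i j : Fin n) (b : Bool) : ℝ :=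
  if j < i then 1 - (if b then 1 else 0) else (if b then 1 else 0)

theorem obsOfCoins_apply (ω : Fin n × Fin n → Bool) (i j : Fin n) :
    obsOfCoins ω i j = entryOfCoin i j (ω (coinKey i j)) := by
  rcases lt_trichotomy i j with h | rfl | h
  · simp [obsOfCoins, entryOfCoin, coinKey, h, h.not_gt]
  · simp [obsOfCoins, entryOfCoin, coinKey]
  · simp [obsOfCoins, entryOfCoin, coinKey, h, h.not_gt]

theorem coinKey_injective (i : Fin n) : Function.Injective (coinKey i) :=
  Function.LeftInverse.injective (g := fun p => if p.1 = i then p.2 else p.1) fun j => by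
    by_cases h : j < i
    · simp [coinKey, h, h.ne]
    · simp [coinKey, h]

variable {M : Fin n → Fin n → ℝ}

theorem isProbabilityMeasure_bern_coinProb (h01 : ∀ i j, 0 ≤ M i j ∧ M i j ≤ 1)
    (p : Fin n × Fin n) : IsProbabilityMeasure (bern (coinProb M p)) := by
  unfold coinProb
  split_ifs
  · exact isProbabilityMeasure_bern (by norm_num) (by norm_num)
  · exact isProbabilityMeasure_bern (h01 p.1 p.2).1 (h01 p.1 p.2).2

theorem isProbabilityMeasure_obsMeasure (h01 : ∀ i j, 0 ≤ M i j ∧ M i j ≤ 1) :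
    IsProbabilityMeasure (obsMeasure M) := by
  have := isProbabilityMeasure_bern_coinProb h01
  rw [obsMeasure_eq_map]
  exact Measure.isProbabilityMeasure_map (measurable_of_countable _).aemeasurable

open ProbabilityTheory in
theorem iIndepFun_obsOfCoins_row (h01 : ∀ i j, 0 ≤ M i j ∧ M i j ≤ 1) (i : Fin n) :
    iIndepFun (fun j ω => obsOfCoins ω i j) (coinMeasure M) := by
  have := isProbabilityMeasure_bern_coinProb h01
  have hcoins := (iIndepFun_pi (μ := fun p => bern (coinProb M p)) (X := fun _ => id)
    fun _ => aemeasurable_id).precomp (coinKey_injective i)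
  simpa only [obsOfCoins_apply, coinMeasure, Function.comp_def, id] using
    hcoins.comp (fun j => entryOfCoin i j) fun _ => .of_discrete

theorem integral_obsOfCoins (h01 : ∀ i j, 0 ≤ M i j ∧ M i j ≤ 1)
    (hskew : ∀ i j, M j i = 1 - M i j) (i j : Fin n) :
    ∫ ω, obsOfCoins ω i j ∂coinMeasure M = M i j := by
  have := isProbabilityMeasure_bern_coinProb h01
  have hprob (p : Fin n × Fin n) : 0 ≤ coinProb M p ∧ coinProb M p ≤ 1 := by
    unfold coinProb
    split_ifs
    · norm_num
    · exact h01 p.1 p.2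
  simp only [obsOfCoins_apply, coinMeasure]
  rw [integral_comp_eval .of_discrete, integral_bern (hprob _).1 (hprob _).2]
  rcases lt_trichotomy j i with h | rfl | h
  · simp [entryOfCoin, coinKey, coinProb, h, h.ne, hskew i j]
  · simp [entryOfCoin, coinKey, coinProb]
    linarith [hskew j j]
  · simp [entryOfCoin, coinKey, coinProb, h.not_gt, h.ne]

theorem measureReal_le_abs_winCount_sub_le (h01 : ∀ i j, 0 ≤ M i j ∧ M i j ≤ 1)
    (hskew : ∀ i j, M j i = 1 - M i j) (i : Fin n) {ε : ℝ} (hε : 0 ≤ ε) :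
    (obsMeasure M).real {Y | ε ≤ |winCount Y i - ∑ j, M i j|}
      ≤ 2 * Real.exp (-2 * ε ^ 2 / n) := by
  have := isProbabilityMeasure_bern_coinProb h01
  rw [obsMeasure_eq_map, map_measureReal_apply (measurable_of_countable _)
    (measurableSet_le measurable_const (by unfold winCount; fun_prop))]
  convert measureReal_le_abs_sum_sub_integral_le (iIndepFun_obsOfCoins_row h01 i)
    (fun _ => measurable_of_countable _) (fun j ω => ?_) hε using 4
  · simp [winCount, integral_obsOfCoins h01 hskew, Finset.sum_sub_distrib]
  · simp
  · rw [obsOfCoins_apply]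
    unfold entryOfCoin
    split_ifs <;> norm_num

theorem measureReal_exists_le_abs_winCount_sub_le (h01 : ∀ i j, 0 ≤ M i j ∧ M i j ≤ 1)
    (hskew : ∀ i j, M j i = 1 - M i j) {ε : ℝ} (hε : 0 ≤ ε) :
    (obsMeasure M).real {Y | ∃ i, ε ≤ |winCount Y i - ∑ j, M i j|}
      ≤ 2 * n * Real.exp (-2 * ε ^ 2 / n) := by
  rw [Set.ofPred_exists]
  refine (measureReal_iUnion_fintype_le _).trans ?_
  refine (Finset.sum_le_sum fun i _ =>
    measureReal_le_abs_winCount_sub_le h01 hskew i hε).trans_eq ?_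
  simp only [Finset.sum_const, Finset.card_univ, Fintype.card_fin, nsmul_eq_mul]
  ring

theorem ofReal_one_sub_le_obsMeasure_abs_winCount_sub_le (h01 : ∀ i j, 0 ≤ M i j ∧ M i j ≤ 1)
    (hskew : ∀ i j, M j i = 1 - M i j) (hn : 64 ≤ Real.log n) :
    ENNReal.ofReal (1 - ((n : ℝ) ^ 20)⁻¹)
      ≤ obsMeasure M {Y | ∀ i, |winCount Y i - ∑ j, M i j| ≤ Real.sqrt n * Real.log n / 2} := by
  set ε := Real.sqrt n * Real.log n / 2
  have hn0 : (0 : ℝ) < n := Nat.cast_pos.2 <| Nat.pos_of_ne_zero <| by rintro rfl; norm_num at hn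
  have hbad := measureReal_exists_le_abs_winCount_sub_le h01 hskew (ε := ε) (by positivity)
  have hexponent : -2 * ε ^ 2 / n = -Real.log n ^ 2 / 2 := by
    rw [div_pow, mul_pow, Real.sq_sqrt hn0.le]
    field_simp
  rw [hexponent] at hbad
  replace hbad := hbad.trans (two_mul_mul_exp_neg_log_sq_le hn0 hn)
  have := isProbabilityMeasure_obsMeasure h01
  calc ENNReal.ofReal (1 - ((n : ℝ) ^ 20)⁻¹)
      = 1 - ENNReal.ofReal ((n : ℝ) ^ 20)⁻¹ := by
        rw [ENNReal.ofReal_sub _ (by positivity), ENNReal.ofReal_one]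
    _ ≤ 1 - obsMeasure M {Y | ∃ i, ε ≤ |winCount Y i - ∑ j, M i j|} := by
        gcongr
        rw [← ofReal_measureReal]
        exact ENNReal.ofReal_le_ofReal hbad
    _ ≤ _ := by
        rw [tsub_le_iff_right, ← measure_univ (μ := obsMeasure M)]
        refine (measure_mono fun Y _ => ?_).trans (measure_union_le _ _)
        by_cases hY : ∃ i, ε ≤ |winCount Y i - ∑ j, M i j|
        · exact Or.inr hY
        · push Not at hY
          exact Or.inl fun i => (hY i).le

end ObservationModel

/-- properties of the first two CRL steps: if `M*` is SST faithful to the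
identity permutation, then with probability at least `1 − n⁻²⁰` over the observation `Y`
and the internal randomization `τ`, the permutation `πCRL Y τ` produced by Steps 1–2 of
the CRL estimator satisfies (a) `max_i Σ_ℓ |M*_{iℓ} − M*_{πCRL(i)ℓ}| ≤ √n (log n)²` and
(b) the selected subset `Ssel Y` has size at least `k_max(M*)`. -/
theorem crl_steps_one_two :
    ∃ N : ℕ, ∀ n : ℕ, N ≤ n →
      ∀ ord : (Fin n → Fin n → ℝ) → Equiv.Perm (Fin n),
        (∀ Y : Fin n → Fin n → ℝ, ∀ i j : Fin n,
          ord Y i < ord Y j → winCount Y i ≤ winCount Y j) →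
      ∀ Ssel : (Fin n → Fin n → ℝ) → Finset (Fin n),
        (∀ Y : Fin n → Fin n → ℝ,
          (∀ i ∈ Ssel Y, ∀ j ∈ Ssel Y,
            |winCount Y i - winCount Y j| ≤ Real.sqrt n * Real.log n) ∧
          (∀ T : Finset (Fin n),
            (∀ i ∈ T, ∀ j ∈ T, |winCount Y i - winCount Y j| ≤ Real.sqrt n * Real.log n) →
              T.card ≤ (Ssel Y).card) ∧
          (∀ i ∈ Ssel Y, ∀ j ∈ Ssel Y, ∀ l : Fin n,
            ord Y i ≤ ord Y l → ord Y l ≤ ord Y j → l ∈ Ssel Y)) →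
      ∀ πCRL : (Fin n → Fin n → ℝ) → Equiv.Perm (Fin n) → Equiv.Perm (Fin n),
        (∀ Y : Fin n → Fin n → ℝ,
          Measure.map (πCRL Y) (unifOn (Set.univ : Set (Equiv.Perm (Fin n)))) =
            unifOn {σ : Equiv.Perm (Fin n) |
              ∃ ρ : Equiv.Perm (Fin n), (∀ i ∉ Ssel Y, ρ i = i) ∧ σ = ρ.trans (ord Y)}) →
      ∀ Mstar ∈ sstClass n,
        (∀ i j k : Fin n, j < i → Mstar j k ≤ Mstar i k) →
        ENNReal.ofReal (1 - ((n : ℝ) ^ 20)⁻¹) ≤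
          ((obsMeasure Mstar).prod (unifOn (Set.univ : Set (Equiv.Perm (Fin n)))))
            {p : (Fin n → Fin n → ℝ) × Equiv.Perm (Fin n) |
              (∀ i : Fin n,
                ∑ l, |Mstar i l - Mstar (πCRL p.1 p.2 i) l| ≤
                  Real.sqrt n * (Real.log n) ^ 2) ∧
              kmaxM Mstar ≤ (Ssel p.1).card} := by
  refine ⟨⌈Real.exp 64⌉₊, fun n hn ord hord Ssel hSsel πCRL hπ Mstar hM hmono => ?_⟩
  obtain ⟨h01, hskew, -⟩ := hM
  have hlog : 64 ≤ Real.log n := by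
    have hexp : Real.exp 64 ≤ n := (Nat.le_ceil _).trans (by exact_mod_cast hn)
    exact (Real.le_log_iff_exp_le ((Real.exp_pos 64).trans_le hexp)).2 hexp
  have hrows : Monotone Mstar := monotone_iff_forall_lt.2 fun j i h k => hmono i j k h
  have hrowSums : Monotone fun i => ∑ l, Mstar i l :=
    fun a b h => Finset.sum_le_sum fun l _ => hrows h l
  set w := Real.sqrt n * Real.log n
  have hw : 0 ≤ w := by positivity
  set G := {Y | ∀ i, |winCount Y i - ∑ l, Mstar i l| ≤ w / 2}
  have := isProbabilityMeasure_unifOn_univ (α := Equiv.Perm (Fin n))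
  calc ENNReal.ofReal (1 - ((n : ℝ) ^ 20)⁻¹)
      ≤ obsMeasure Mstar G := ofReal_one_sub_le_obsMeasure_abs_winCount_sub_le h01 hskew hlog
    _ = ((obsMeasure Mstar).prod (unifOn Set.univ)) (G ×ˢ Set.univ) := by
        rw [Measure.prod_prod, measure_univ, mul_one]
    _ ≤ _ := measure_mono ?_
  rintro ⟨Y, τ⟩ ⟨hY, -⟩
  obtain ⟨hwindow, hlargest, -⟩ := hSsel Y
  obtain ⟨ρ, hρ, hπY⟩ := apply_mem_of_map_unifOn_univ_eq (hπ Y) τ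
  refine ⟨fun i => ?_, kmaxM_le_of_forall_card_le fun T hT => hlargest T fun a ha b hb => ?_⟩
  · rw [hrows.sum_abs_sub_eq_abs_sum_sub, hπY]
    calc _ ≤ w + 4 * (w / 2) := abs_sub_apply_apply_le_of_sorted_of_shuffle hrowSums
          (ord Y).injective (hord Y) hY hw hwindow hρ i
      _ ≤ Real.sqrt n * Real.log n ^ 2 := by nlinarith
  · have hab : ∑ l, Mstar a l = ∑ l, Mstar b l := by rw [hT a ha b hb]
    have ha := abs_le.1 (hY a)
    have hb := abs_le.1 (hY b)
    rw [abs_le]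
    constructor <;> linarith

end SSTPaper
end
end

section
/- Let Y ∈ {0,1}^{n×n} be any matrix satisfying Y_{ji} = 1 − Y_{ij} for all i ≠ j. Then there exists a matrix M̃ ∈ C_SST such that ‖Y − (1/2)·11ᵀ‖²_F = ‖Y − M̃‖²_F + ‖(1/2)·11ᵀ − M̃‖²_F and ‖M̃ − (1/2)·11ᵀ‖²_F ≥ (n − 1)/4. -/
/-!
Let `v` be an item with at least `(n - 1) / 2` wins in `Y`; one exists because the `n (n - 1) / 2`
games produce exactly one win each. Let `M̃` agree with `Y` on the games of `v` that `v` won and be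
`1/2` everywhere else. Every entry of `M̃` equals that of `Y` or that of `½·11ᵀ`, so the
Pythagorean identity holds entry by entry; ranking `v` first, then the items that beat `v`, then
those `v` beat, shows that `M̃` is SST; and each win of `v` contributes two entries `(1/2)²` to
`‖M̃ − ½·11ᵀ‖²_F`.
-/

open MeasureTheory ENNReal

noncomputable section

namespace SSTPaper

theorem mem_sstClass_of_score {n : ℕ} {α : Type*} [LinearOrder α] {M : Fin n → Fin n → ℝ}
    (hM01 : ∀ i j, 0 ≤ M i j ∧ M i j ≤ 1) (hMskew : ∀ i j, M j i = 1 - M i j)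
    (f : Fin n → α) (hf : ∀ i j, f j ≤ f i → ∀ k, M j k ≤ M i k) : M ∈ sstClass n := by
  refine ⟨hM01, hMskew, (Tuple.sort f)⁻¹, fun i j k hji => hf i j ?_ k⟩
  simpa using Tuple.monotone_sort f hji.le

/-- Item `v` beats each `j ≠ v` with probability `(1 + r j) / 2`; all other pairs tie. -/
def starMatrix {n : ℕ} (v : Fin n) (r : Fin n → ℝ) : Fin n → Fin n → ℝ :=
  let A : Fin n → Fin n → ℝ := Pi.single v r
  fun i j => (1 + A i j - A j i) / 2

section starMatrix

variable {n : ℕ} (v : Fin n) (r : Fin n → ℝ)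

theorem starMatrix_apply (i j : Fin n) : starMatrix v r i j =
    (1 + (if i = v then r j else 0) - (if j = v then r i else 0)) / 2 := by
  simp only [starMatrix, Pi.single_apply]
  split_ifs <;> simp_all

theorem starMatrix_mem_sstClass (hr : ∀ j, 0 ≤ r j ∧ r j ≤ 1) :
    starMatrix v r ∈ sstClass n := by
  refine mem_sstClass_of_score ?_ ?_ (fun i => if i = v then 1 else -r i) ?_
  · intro i j
    rw [starMatrix_apply]
    constructor <;> split_ifs <;> linarith [hr i, hr j]
  · intro i j
    simp only [starMatrix]
    ring
  · intro i j hji k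
    simp only [starMatrix_apply]
    split_ifs at hji ⊢ <;> simp_all <;> linarith [hr i, hr j, hr k]

theorem frobSq_starMatrix_sub_half :
    frobSq (starMatrix v r - fun _ _ => (1 : ℝ) / 2) = (∑ j ∈ Finset.univ.erase v, r j ^ 2) / 2 := by
  have row_v : ∑ j, (starMatrix v r v j - 1 / 2) ^ 2 = ∑ j ∈ Finset.univ.erase v, r j ^ 2 / 4 := by
    rw [← Finset.sum_erase (a := v) _ (by simp [starMatrix_apply])]
    exact Finset.sum_congr rfl fun j hj => by
      rw [starMatrix_apply, if_pos rfl, if_neg (Finset.ne_of_mem_erase hj)]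
      ring
  have row_ne {i : Fin n} (hi : i ≠ v) : ∑ j, (starMatrix v r i j - 1 / 2) ^ 2 = r i ^ 2 / 4 := by
    rw [Finset.sum_eq_single v (fun j _ hj => by simp [starMatrix_apply, hi, hj]) (by simp)]
    simp [starMatrix_apply, hi]
    ring
  simp only [frobSq, Pi.sub_apply]
  rw [← Finset.add_sum_erase _ _ (Finset.mem_univ v), row_v,
    Finset.sum_congr rfl fun i hi => row_ne (Finset.ne_of_mem_erase hi), ← Finset.sum_add_distrib,
    Finset.sum_div]
  exact Finset.sum_congr rfl fun _ _ => by ring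

end starMatrix

theorem frobSq_sub_eq_add_of_forall_eq_or_eq {n : ℕ} {A B M : Fin n → Fin n → ℝ}
    (h : ∀ i j, M i j = A i j ∨ M i j = B i j) :
    frobSq (A - B) = frobSq (A - M) + frobSq (B - M) := by
  simp only [frobSq, Pi.sub_apply, ← Finset.sum_add_distrib]
  refine Finset.sum_congr rfl fun i _ => Finset.sum_congr rfl fun j _ => ?_
  rcases h i j with h | h <;> rw [h] <;> ring

theorem exists_sub_one_div_two_le_sum_erase {n : ℕ} [NeZero n] {Y : Fin n → Fin n → ℝ}
    (hYskew : ∀ i j : Fin n, i ≠ j → Y j i = 1 - Y i j) :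
    ∃ v, ((n : ℝ) - 1) / 2 ≤ ∑ j ∈ Finset.univ.erase v, Y v j := by
  have hpairs : ∑ v, ∑ j ∈ Finset.univ.erase v, (Y v j + Y j v) = n * ((n : ℝ) - 1) := by
    rw [Finset.sum_congr rfl fun v _ => Finset.sum_congr rfl fun j hj =>
      show Y v j + Y j v = 1 by rw [hYskew v j (Finset.ne_of_mem_erase hj).symm]; ring]
    simp [Finset.card_erase_of_mem, Nat.cast_pred (NeZero.pos n)]
    ring
  have hswap : ∑ v, ∑ j ∈ Finset.univ.erase v, Y j v = ∑ v, ∑ j ∈ Finset.univ.erase v, Y v j :=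
    Finset.sum_comm' fun v j => by simp [eq_comm]
  simp only [Finset.sum_add_distrib, hswap] at hpairs
  obtain ⟨v, -, hv⟩ := Finset.exists_le_of_sum_le Finset.univ_nonempty
    (f := fun _ => ((n : ℝ) - 1) / 2) (g := fun v => ∑ j ∈ Finset.univ.erase v, Y v j)
    (by simp only [Finset.sum_const, Finset.card_univ, Fintype.card_fin, nsmul_eq_mul]; linarith)
  exact ⟨v, hv⟩

theorem starMatrix_eq_or_eq_half {n : ℕ} {Y : Fin n → Fin n → ℝ}
    (hY01 : ∀ i j, Y i j = 0 ∨ Y i j = 1) (hYskew : ∀ i j : Fin n, i ≠ j → Y j i = 1 - Y i j)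
    (v i j : Fin n) : starMatrix v (Y v) i j = Y i j ∨ starMatrix v (Y v) i j = 1 / 2 := by
  rw [starMatrix_apply]
  by_cases hi : i = v <;> by_cases hj : j = v
  · simp [hi, hj]
  · subst hi
    rcases hY01 i j with h | h <;> simp [h, hj]
  · subst hj
    rw [hYskew j i (Ne.symm hi)]
    rcases hY01 j i with h | h <;> simp [h, hi]
  · simp [hi, hj]

theorem exists_bad_sst_matrix_general {n : ℕ}
    (Y : Fin n → Fin n → ℝ)
    (hY01 : ∀ i j, Y i j = 0 ∨ Y i j = 1)
    (hYskew : ∀ i j : Fin n, i ≠ j → Y j i = 1 - Y i j) :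
    ∃ Mt ∈ sstClass n,
      frobSq (Y - fun _ _ => (1 : ℝ) / 2) =
        frobSq (Y - Mt) + frobSq ((fun _ _ => (1 : ℝ) / 2) - Mt) ∧
      ((n : ℝ) - 1) / 4 ≤ frobSq (Mt - fun _ _ => (1 : ℝ) / 2) := by
  rcases n.eq_zero_or_pos with rfl | hpos
  · exact ⟨Y, by simp [sstClass], by norm_num [frobSq]⟩
  have : NeZero n := ⟨hpos.ne'⟩
  obtain ⟨v, hv⟩ := exists_sub_one_div_two_le_sum_erase hYskew
  have hrow01 (j : Fin n) : 0 ≤ Y v j ∧ Y v j ≤ 1 := by rcases hY01 v j with h | h <;> simp [h]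
  have hrow_sq : ∑ j ∈ Finset.univ.erase v, Y v j ^ 2 = ∑ j ∈ Finset.univ.erase v, Y v j :=
    Finset.sum_congr rfl fun j _ => by rcases hY01 v j with h | h <;> simp [h]
  refine ⟨starMatrix v (Y v), starMatrix_mem_sstClass v (Y v) hrow01,
    frobSq_sub_eq_add_of_forall_eq_or_eq (starMatrix_eq_or_eq_half hY01 hYskew v), ?_⟩
  rw [frobSq_starMatrix_sub_half, hrow_sq]
  linarith

/-- for any binary skew observation matrix `Y`, there exists `M̃ ∈ C_SST`
satisfying both the Pythagorean identity
`‖Y − ½·11ᵀ‖²_F = ‖Y − M̃‖²_F + ‖½·11ᵀ − M̃‖²_F` and `‖M̃ − ½·11ᵀ‖²_F ≥ (n − 1)/4`. -/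
theorem exists_bad_sst_matrix {n : ℕ} (hn : 2 ≤ n)
    (Y : Fin n → Fin n → ℝ)
    (hY01 : ∀ i j, Y i j = 0 ∨ Y i j = 1)
    (hYskew : ∀ i j : Fin n, i ≠ j → Y j i = 1 - Y i j) :
    ∃ Mt ∈ sstClass n,
      frobSq (Y - fun _ _ => (1 : ℝ) / 2) =
        frobSq (Y - Mt) + frobSq ((fun _ _ => (1 : ℝ) / 2) - Mt) ∧
      ((n : ℝ) - 1) / 4 ≤ frobSq (Mt - fun _ _ => (1 : ℝ) / 2) :=
  exists_bad_sst_matrix_general Y hY01 hYskew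

end SSTPaper
end
end
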